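/- The classes of tree languages recognizable by global Parikh tree automata (GPTA) and by non-global Parikh tree automata (PTA) are incomparable: there is a GPTA-recognizable tree language that is not PTA-recognizable (namely L_{γγ} = {σ(γⁿ#,γⁿ#) | n ∈ ℕ}), and a PTA-recognizable tree language that is not GPTA-recognizable (namely L_ab, the trees over {a⁽²⁾,b⁽²⁾,#⁽⁰⁾} all of whose complete path words have the form aⁿbⁿ# with n ≥ 1). -/

import Mathlib

/-! ## Trees over ranked alphabets: a symbol `s` has `ar s` children -/

inductive GTree (S : Type) (ar : S → ℕ) : Type where
  | node (s : S) (c : Fin (ar s) → GTree S ar) : GTree S ar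

namespace GTree
variable {S : Type} {ar : S → ℕ}

/-- The height of a tree (leaves have height 0). -/
def height : GTree S ar → ℕ
  | node _ c => Finset.univ.sup fun i => height (c i) + 1

/-- The size (number of positions) of a tree. -/
def size : GTree S ar → ℕ
  | node _ c => 1 + ∑ i, size (c i)

/-- The subtree at a position (a list of child indices), if the position exists. -/
def subAt : GTree S ar → List ℕ → Option (GTree S ar)
  | t, [] => some t
  | node s c, i :: ρ => if h : i < ar s then subAt (c ⟨i, h⟩) ρ else none

/-- The list of path words of all complete (root-to-leaf) paths. -/
def pathWords : GTree S ar → List (List S)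
  | node s c =>
    if _ : ar s = 0 then [[s]]
    else ((List.finRange (ar s)).map fun i => (pathWords (c i)).map (s :: ·)).flatten

end GTree

/-! ## Semilinear sets -/

def IsLinearSetFin {m : ℕ} (C : Set (Fin m → ℕ)) : Prop :=
  ∃ (l : ℕ) (d0 : Fin m → ℕ) (d : Fin l → Fin m → ℕ),
    C = {v | ∃ c : Fin l → ℕ, v = d0 + ∑ i, c i • d i}

def IsSemilinear {m : ℕ} (C : Set (Fin m → ℕ)) : Prop :=
  ∃ (k : ℕ) (L : Fin k → Set (Fin m → ℕ)), (∀ i, IsLinearSetFin (L i)) ∧ C = ⋃ i, L i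

/-! ## Non-global Parikh tree automata (PTA) -/

structure PTA (S : Type) (ar : S → ℕ) (m : ℕ) where
  Q : Type
  finQ : Fintype Q
  init : Q
  D : Finset (Fin m → ℕ)
  trans : Q → (s : S) → (Fin (ar s) → Q × (Fin m → ℕ)) → Prop
  transD : ∀ q s f, trans q s f → ∀ i, (f i).2 ∈ D
  C : Set (Fin m → ℕ)
  semiC : IsSemilinear C

/-- `A.Acc q w ξ` : starting in configuration `(q, w)`, the automaton `A` can compute
the tree `ξ`, adding counter vectors pathwise; a nullary transition additionally
requires the current counter vector to lie in `A.C`. -/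
inductive PTA.Acc {S : Type} {ar : S → ℕ} {m : ℕ} (A : PTA S ar m) :
    A.Q → (Fin m → ℕ) → GTree S ar → Prop where
  | node {q : A.Q} {w : Fin m → ℕ} {s : S} {f : Fin (ar s) → A.Q × (Fin m → ℕ)}
      {c : Fin (ar s) → GTree S ar}
      (ht : A.trans q s f) (hC : ar s = 0 → w ∈ A.C)
      (hc : ∀ i, PTA.Acc A (f i).1 (w + (f i).2) (c i)) :
      PTA.Acc A q w (.node s c)

def PTA.Lang {S : Type} {ar : S → ℕ} {m : ℕ} (A : PTA S ar m) : Set (GTree S ar) :=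
  {ξ | A.Acc A.init 0 ξ}

/-! ## Global Parikh tree automata (GPTA) -/

structure GPTA (S : Type) (ar : S → ℕ) (m : ℕ) where
  Q : Type
  finQ : Fintype Q
  init : Q
  D : Finset (Fin m → ℕ)
  trans : Q → (s : S) → (Fin m → ℕ) → (Fin (ar s) → Q) → Prop
  transD : ∀ q s d f, trans q s d f → d ∈ D
  C : Set (Fin m → ℕ)
  semiC : IsSemilinear C

/-- `A.Run q ξ v` : there is a run of `A` from state `q` on a `D`-decoration of `ξ`
whose extended Parikh image (the sum of all vectors over all positions) is `v`. -/
inductive GPTA.Run {S : Type} {ar : S → ℕ} {m : ℕ} (A : GPTA S ar m) :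
    A.Q → GTree S ar → (Fin m → ℕ) → Prop where
  | node {q : A.Q} {s : S} {d : Fin m → ℕ} {f : Fin (ar s) → A.Q}
      {c : Fin (ar s) → GTree S ar} {v : Fin (ar s) → Fin m → ℕ}
      (ht : A.trans q s d f) (hc : ∀ i, GPTA.Run A (f i) (c i) (v i)) :
      GPTA.Run A q (.node s c) (d + ∑ i, v i)

def GPTA.Lang {S : Type} {ar : S → ℕ} {m : ℕ} (A : GPTA S ar m) : Set (GTree S ar) :=
  {ξ | ∃ v, A.Run A.init ξ v ∧ v ∈ A.C}

/-! ## The ranked alphabet {a⁽²⁾, b⁽²⁾, #⁽⁰⁾} and the tree language L_ab -/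

inductive Sab : Type where | a | b | hash
  deriving DecidableEq

def arAb : Sab → ℕ
  | .a => 2
  | .b => 2
  | .hash => 0

instance : Fintype Sab :=
  ⟨⟨{Sab.a, Sab.b, Sab.hash}, by decide⟩, fun x => by cases x <;> decide⟩

/-- All trees each of whose complete path words has the form `aⁿbⁿ#`, `n ≥ 1`. -/
def Lab : Set (GTree Sab arAb) :=
  {ξ | ∀ w ∈ ξ.pathWords, ∃ n ≥ 1,
    w = List.replicate n Sab.a ++ List.replicate n Sab.b ++ [Sab.hash]}

/-! ## The ranked alphabet {σ⁽²⁾, γ⁽¹⁾, #⁽⁰⁾} -/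

inductive Sg : Type where | sig | gam | hash
  deriving DecidableEq

def arG : Sg → ℕ
  | .sig => 2
  | .gam => 1
  | .hash => 0

instance : Fintype Sg :=
  ⟨⟨{Sg.sig, Sg.gam, Sg.hash}, by decide⟩, fun x => by cases x <;> decide⟩

def hashT : GTree Sg arG := .node .hash ![]
def gamT (t : GTree Sg arG) : GTree Sg arG := .node .gam ![t]
def sigT (l r : GTree Sg arG) : GTree Sg arG := .node .sig ![l, r]

/-- γⁿ(t) -/
def gpow : ℕ → GTree Sg arG → GTree Sg arG
  | 0, t => t
  | n + 1, t => gamT (gpow n t)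

/-- L_γγ = {σ(γⁿ#, γⁿ#) | n ∈ ℕ} -/
def Lgg : Set (GTree Sg arG) := {ξ | ∃ n, ξ = sigT (gpow n hashT) (gpow n hashT)}

/-- L₃ = {γⁿ(σ(γⁿ#, γⁿ#)) | n ∈ ℕ} -/
def L3 : Set (GTree Sg arG) := {ξ | ∃ n, ξ = gpow n (sigT (gpow n hashT) (gpow n hashT))}

/-! A non-global PTA hands every child of a node its own copy of the counter configuration, so
once the transition at the root of `σ(t₁, t₂)` is fixed, `t₁` and `t₂` are checked independently.
There are only finitely many root transitions, so two trees `σ(γⁿ#, γⁿ#)` and `σ(γᵏ#, γᵏ#)` with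
`n ≠ k` share one, and then `σ(γⁿ#, γᵏ#)` is accepted as well.

A GPTA only tests the sum of all counter vectors, and that sum does not change when two subtrees
processed in the same state are exchanged. In the full binary tree with `K > |Q|` levels of `a`
above `K` levels of `b`, two right children of the leftmost `a`-path at different depths are
reached in the same state; exchanging them produces a path `aⁱbᴷ#` with `i ≠ K`.

Conversely, a GPTA recognizes `L_γγ` by counting the `γ`s of the two branches in two coordinates,
and a PTA recognizes `L_ab` by counting `a`s and `b`s along every path. -/

namespace GTree
variable {S : Type} {ar : S → ℕ}

lemma pathWords_of_arity_eq_zero {s : S} (h : ar s = 0) (c : Fin (ar s) → GTree S ar) :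
    (node s c).pathWords = [[s]] := by
  rw [pathWords, dif_pos h]

lemma mem_pathWords_node {s : S} (h : ar s ≠ 0) {c : Fin (ar s) → GTree S ar} {p : List S} :
    p ∈ (node s c).pathWords ↔ ∃ i, ∃ p' ∈ (c i).pathWords, p = s :: p' := by
  simp only [pathWords, dif_neg h, List.mem_flatten, List.mem_map, List.mem_finRange, true_and]
  constructor
  · rintro ⟨_, ⟨i, rfl⟩, hp⟩
    obtain ⟨p', hp', rfl⟩ := List.mem_map.1 hp
    exact ⟨i, p', hp', rfl⟩
  · rintro ⟨i, p', hp', rfl⟩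
    exact ⟨_, ⟨i, rfl⟩, List.mem_map_of_mem hp'⟩

lemma forall_mem_pathWords_node {s : S} (h : ar s ≠ 0) {c : Fin (ar s) → GTree S ar}
    {P : List S → Prop} :
    (∀ p ∈ (node s c).pathWords, P p) ↔ ∀ i, ∀ p ∈ (c i).pathWords, P (s :: p) := by
  simp only [mem_pathWords_node h]
  exact ⟨fun H i p hp => H _ ⟨i, p, hp, rfl⟩, fun H _ ⟨i, p, hp, e⟩ => e ▸ H i p hp⟩

lemma pathWords_ne_nil (t : GTree S ar) : t.pathWords ≠ [] := by
  induction t with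
  | node s c ih =>
    by_cases h : ar s = 0
    · simp [pathWords_of_arity_eq_zero h]
    · obtain ⟨p, hp⟩ := List.exists_mem_of_ne_nil _ (ih ⟨0, Nat.pos_of_ne_zero h⟩)
      exact List.ne_nil_of_mem ((mem_pathWords_node h).2 ⟨_, p, hp, rfl⟩)

def binNode (σ : S) (l r : GTree S ar) : GTree S ar :=
  node σ fun i => if (i : ℕ) = 0 then l else r

/-- `spine σ base K ts = σ(σ(⋯σ(base, ts (K-1))⋯, ts 1), ts 0)`. -/
def spine (σ : S) (base : GTree S ar) : (K : ℕ) → (Fin K → GTree S ar) → GTree S ar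
  | 0, _ => base
  | K + 1, ts => binNode σ (spine σ base K (ts ∘ Fin.succ)) (ts 0)

lemma forall_mem_pathWords_binNode {σ : S} (hσ : ar σ = 2) {l r : GTree S ar}
    {P : List S → Prop} :
    (∀ p ∈ (binNode σ l r).pathWords, P p) ↔
      (∀ p ∈ l.pathWords, P (σ :: p)) ∧ ∀ p ∈ r.pathWords, P (σ :: p) := by
  rw [binNode, forall_mem_pathWords_node (by omega)]
  refine ⟨fun H => ⟨H ⟨0, by omega⟩, H ⟨1, by omega⟩⟩, ?_⟩
  rintro ⟨hl, hr⟩ ⟨_ | i, hi⟩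
  exacts [hl, hr]

lemma forall_mem_pathWords_spine {σ : S} (hσ : ar σ = 2) {base : GTree S ar} {K : ℕ}
    {ts : Fin K → GTree S ar} {P : List S → Prop} :
    (∀ p ∈ (spine σ base K ts).pathWords, P p) ↔
      (∀ p ∈ base.pathWords, P (List.replicate K σ ++ p)) ∧
        ∀ i, ∀ p ∈ (ts i).pathWords, P (List.replicate (i + 1) σ ++ p) := by
  induction K generalizing P with
  | zero => simp [spine]
  | succ K ih =>
    rw [spine, forall_mem_pathWords_binNode hσ, ih, Fin.forall_fin_succ]
    simp only [Function.comp_apply, Fin.val_zero, Fin.val_succ, List.replicate_succ,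
      List.cons_append]
    tauto

end GTree

lemma isSemilinear_of_isLinearSetFin {m : ℕ} {C : Set (Fin m → ℕ)} (h : IsLinearSetFin C) :
    IsSemilinear C :=
  ⟨1, fun _ => C, fun _ => h, (Set.iUnion_const C).symm⟩

lemma isSemilinear_setOf_apply_zero_eq_apply_one : IsSemilinear {v : Fin 2 → ℕ | v 0 = v 1} := by
  refine isSemilinear_of_isLinearSetFin ⟨1, 0, fun _ => 1, Set.ext fun v => ⟨fun h => ?_, ?_⟩⟩
  · refine ⟨fun _ => v 0, funext fun j => ?_⟩
    fin_cases j <;> simp [h.symm]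
  · rintro ⟨c, rfl⟩
    simp

section PTA
variable {S : Type} {ar : S → ℕ} {m : ℕ}

lemma PTA.acc_node_iff (A : PTA S ar m) {q : A.Q} {w : Fin m → ℕ} {s : S}
    {c : Fin (ar s) → GTree S ar} :
    A.Acc q w (.node s c) ↔ ∃ f, A.trans q s f ∧ (ar s = 0 → w ∈ A.C) ∧
      ∀ i, A.Acc (f i).1 (w + (f i).2) (c i) :=
  ⟨fun h => by cases h with | node ht hC hc => exact ⟨_, ht, hC, hc⟩,
    fun ⟨_, ht, hC, hc⟩ => .node ht hC hc⟩

theorem PTA.exists_ne_acc_node_mixed (A : PTA S ar m) {q : A.Q} {w : Fin m → ℕ} {s : S}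
    (c : ℕ → Fin (ar s) → GTree S ar) (h : ∀ n, A.Acc q w (.node s (c n))) :
    ∃ n k, n ≠ k ∧ ∀ c' : Fin (ar s) → GTree S ar, (∀ i, c' i = c n i ∨ c' i = c k i) →
      A.Acc q w (.node s c') := by
  have := A.finQ
  choose f ht hC hc using fun n => A.acc_node_iff.1 (h n)
  let F : ℕ → Fin (ar s) → A.Q × A.D := fun n i =>
    ((f n i).1, ⟨(f n i).2, A.transD _ _ _ (ht n) i⟩)
  obtain ⟨n, k, hnk, hF⟩ := Finite.exists_ne_map_eq_of_infinite F
  have hf : f k = f n := funext fun i => by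
    have := congrFun hF i
    simp only [F, Prod.mk.injEq, Subtype.mk.injEq] at this
    exact Prod.ext this.1.symm this.2.symm
  refine ⟨n, k, hnk, fun c' hc' => .node (ht n) (hC n) fun i => ?_⟩
  rcases hc' i with h' | h'
  · exact h' ▸ hc n i
  · exact h' ▸ hf ▸ hc k i

/-- `δ q s` is the configuration that a node labelled `s`, read in state `q`, hands to each of its
children. -/
def PathAccepts {Q : Type} (ar : S → ℕ) (δ : Q → S → Option (Q × (Fin m → ℕ)))
    (C : Set (Fin m → ℕ)) : Q → (Fin m → ℕ) → List S → Prop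
  | _, _, [] => False
  | q, w, s :: p => ∃ r ∈ δ q s,
      if ar s = 0 then p = [] ∧ w ∈ C else PathAccepts ar δ C r.1 (w + r.2) p

section PathAccepts
variable {Q : Type} {δ : Q → S → Option (Q × (Fin m → ℕ))} {C : Set (Fin m → ℕ)} {q : Q}
  {w : Fin m → ℕ} {s : S}

lemma pathAccepts_singleton_of_arity_eq_zero (hs : ar s = 0) :
    PathAccepts ar δ C q w [s] ↔ (δ q s).isSome ∧ w ∈ C := by
  simp [PathAccepts, hs, Option.isSome_iff_exists]

lemma pathAccepts_cons_of_arity_ne_zero (hs : ar s ≠ 0) {p : List S} :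
    PathAccepts ar δ C q w (s :: p) ↔ ∃ r ∈ δ q s, PathAccepts ar δ C r.1 (w + r.2) p := by
  simp only [PathAccepts, if_neg hs]

end PathAccepts

theorem PTA.acc_iff_forall_pathAccepts (A : PTA S ar m)
    (δ : A.Q → S → Option (A.Q × (Fin m → ℕ)))
    (hδ : ∀ q s f, A.trans q s f ↔ ∃ r ∈ δ q s, ∀ i, f i = r) {q : A.Q} {w : Fin m → ℕ}
    {t : GTree S ar} : A.Acc q w t ↔ ∀ p ∈ t.pathWords, PathAccepts ar δ A.C q w p := by
  induction t generalizing q w with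
  | node s c ih =>
    rw [A.acc_node_iff]
    by_cases hs : ar s = 0
    · simp only [GTree.pathWords_of_arity_eq_zero hs, List.mem_singleton, forall_eq,
        pathAccepts_singleton_of_arity_eq_zero hs, Option.isSome_iff_exists, hδ]
      constructor
      · rintro ⟨f, ⟨r, hr, -⟩, hC, -⟩
        exact ⟨⟨r, hr⟩, hC hs⟩
      · rintro ⟨⟨r, hr⟩, hC⟩
        exact ⟨fun _ => r, ⟨r, hr, fun _ => rfl⟩, fun _ => hC, fun i => (Fin.cast hs i).elim0⟩
    · simp only [GTree.forall_mem_pathWords_node hs, pathAccepts_cons_of_arity_ne_zero hs, hδ]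
      constructor
      · rintro ⟨f, ⟨r, hr, hf⟩, -, hc⟩ i p hp
        exact ⟨r, hr, (ih i).1 (hf i ▸ hc i) p hp⟩
      · intro h
        have i₀ : Fin (ar s) := ⟨0, Nat.pos_of_ne_zero hs⟩
        obtain ⟨p₀, hp₀⟩ := List.exists_mem_of_ne_nil _ (c i₀).pathWords_ne_nil
        obtain ⟨r, hr, -⟩ := h i₀ p₀ hp₀
        refine ⟨fun _ => r, ⟨r, hr, fun _ => rfl⟩, fun h0 => absurd h0 hs, fun i => ?_⟩
        refine (ih i).2 fun p hp => ?_
        obtain ⟨r', hr', hp'⟩ := h i p hp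
        exact Option.mem_unique hr' hr ▸ hp'

end PTA

section GPTA
variable {S : Type} {ar : S → ℕ} {m : ℕ}
open GTree

lemma GPTA.run_node_iff (A : GPTA S ar m) {q : A.Q} {s : S} {c : Fin (ar s) → GTree S ar}
    {v : Fin m → ℕ} :
    A.Run q (.node s c) v ↔ ∃ d f, ∃ u : Fin (ar s) → Fin m → ℕ, A.trans q s d f ∧
      (∀ i, A.Run (f i) (c i) (u i)) ∧ v = d + ∑ i, u i :=
  ⟨fun h => by cases h with | node ht hc => exact ⟨_, _, _, ht, hc, rfl⟩,
    fun ⟨_, _, _, ht, hc, hv⟩ => hv ▸ .node ht hc⟩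

lemma GPTA.run_binNode_iff (A : GPTA S ar m) {σ : S} (hσ : ar σ = 2) {l r : GTree S ar}
    {q : A.Q} {v : Fin m → ℕ} :
    A.Run q (binNode σ l r) v ↔ ∃ d f ul ur, A.trans q σ d f ∧
      A.Run (f ⟨0, by omega⟩) l ul ∧ A.Run (f ⟨1, by omega⟩) r ur ∧ v = d + (ul + ur) := by
  have hsum (u : Fin (ar σ) → Fin m → ℕ) : ∑ i, u i = u ⟨0, by omega⟩ + u ⟨1, by omega⟩ :=
    (Fin.sum_congr' u hσ.symm).symm.trans (Fin.sum_univ_two _)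
  rw [binNode, A.run_node_iff]
  constructor
  · rintro ⟨d, f, u, ht, hc, rfl⟩
    exact ⟨d, f, _, _, ht, hc _, hc _, by rw [hsum]⟩
  · rintro ⟨d, f, ul, ur, ht, hl, hr, rfl⟩
    refine ⟨d, f, fun i => if (i : ℕ) = 0 then ul else ur, ht, ?_, by rw [hsum]; rfl⟩
    rintro ⟨_ | _ | i, hi⟩
    exacts [hl, hr, by omega]

theorem GPTA.exists_run_spine_replace (A : GPTA S ar m) {σ : S} (hσ : ar σ = 2)
    {base : GTree S ar} {K : ℕ} {ts : Fin K → GTree S ar} {q : A.Q} {v : Fin m → ℕ}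
    (h : A.Run q (spine σ base K ts) v) :
    ∃ (qs : Fin K → A.Q) (us : Fin K → Fin m → ℕ) (v₀ : Fin m → ℕ),
      (∀ i, A.Run (qs i) (ts i) (us i)) ∧ v = v₀ + ∑ i, us i ∧
      ∀ (ts' : Fin K → GTree S ar) (us' : Fin K → Fin m → ℕ),
        (∀ i, A.Run (qs i) (ts' i) (us' i)) → A.Run q (spine σ base K ts') (v₀ + ∑ i, us' i) := by
  induction K generalizing q v with
  | zero =>
    exact ⟨Fin.elim0, Fin.elim0, v, fun i => i.elim0, by simp,
      fun _ _ _ => by simpa [spine] using h⟩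
  | succ K ih =>
    obtain ⟨d, f, ul, ur, ht, hl, hr, rfl⟩ := (A.run_binNode_iff hσ).1 h
    obtain ⟨qs, us, v₀, hts, rfl, hreplace⟩ := ih hl
    refine ⟨Fin.cons (f ⟨1, by omega⟩) qs, Fin.cons ur us, d + v₀, Fin.cases hr hts,
      by rw [Fin.sum_univ_succ, Fin.cons_zero]; simp only [Fin.cons_succ]; abel,
      fun ts' us' hts' => (A.run_binNode_iff hσ).2 ⟨d, f, _, _, ht,
        hreplace _ _ fun i => hts' i.succ, hts' 0, by rw [Fin.sum_univ_succ]; abel⟩⟩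

theorem GPTA.exists_run_spine_comp_perm (A : GPTA S ar m) {σ : S} (hσ : ar σ = 2)
    {base : GTree S ar} {K : ℕ} {ts : Fin K → GTree S ar} {q : A.Q} {v : Fin m → ℕ}
    (h : A.Run q (spine σ base K ts) v) :
    ∃ qs : Fin K → A.Q, ∀ e : Equiv.Perm (Fin K), (∀ i, qs (e i) = qs i) →
      A.Run q (spine σ base K (ts ∘ e)) v := by
  obtain ⟨qs, us, v₀, hts, rfl, hreplace⟩ := A.exists_run_spine_replace hσ h
  refine ⟨qs, fun e he => ?_⟩
  have := hreplace (ts ∘ e) (us ∘ e) fun i => he i ▸ hts (e i)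
  rwa [show ∑ i, (us ∘ e) i = ∑ i, us i from Equiv.sum_comp e us] at this

end GPTA

section Lgg

def lggTrans : Option (Fin 2) → (s : Sg) → (Fin 2 → ℕ) → (Fin (arG s) → Option (Fin 2)) → Prop
  | none, .sig, d, f => d = 0 ∧ ∀ i, f i = some i
  | some j, .gam, d, f => d = Pi.single j 1 ∧ ∀ i, f i = some j
  | some _, .hash, d, _ => d = 0
  | _, _, _, _ => False

/-- In state `some j` the automaton reads the `j`-th branch below the root and counts its `γ`s
in coordinate `j`. -/
def lggGPTA : GPTA Sg arG 2 where
  Q := Option (Fin 2)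
  finQ := inferInstance
  init := none
  D := {0, Pi.single 0 1, Pi.single 1 1}
  trans := lggTrans
  transD := by
    rintro (_ | j) s d f h <;> cases s <;> simp only [lggTrans] at h
    · simp [h.1]
    · fin_cases j <;> simp [h.1]
    · simp [h]
  C := {v | v 0 = v 1}
  semiC := isSemilinear_setOf_apply_zero_eq_apply_one

lemma lggGPTA_run_gpow (j : Fin 2) (n : ℕ) :
    lggGPTA.Run (some j) (gpow n hashT) (Pi.single j n) := by
  induction n with
  | zero =>
    exact lggGPTA.run_node_iff.2 ⟨0, fun _ => some j, fun _ => 0, rfl, fun i => i.elim0, by simp⟩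
  | succ n ih =>
    refine lggGPTA.run_node_iff.2 ⟨Pi.single j 1, fun _ => some j, fun _ => Pi.single j n,
      ⟨rfl, fun _ => rfl⟩, fun i => by fin_cases i; exact ih, ?_⟩
    -- `Fin (arG .gam)` is `Fin 1` only up to unfolding `arG`, so the `Fin 1` lemmas are applied
    -- by hand here and below.
    have hs : ∑ _i : Fin (arG .gam), (Pi.single j n : Fin 2 → ℕ) = Pi.single j n :=
      Fin.sum_univ_one _
    rw [hs, ← Pi.single_add, add_comm]

lemma lggGPTA_run_some_iff {j : Fin 2} {t : GTree Sg arG} {v : Fin 2 → ℕ} :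
    lggGPTA.Run (some j) t v ↔ ∃ n, t = gpow n hashT ∧ v = Pi.single j n := by
  refine ⟨fun h => ?_, fun ⟨n, ht, hv⟩ => ht ▸ hv ▸ lggGPTA_run_gpow j n⟩
  induction t generalizing v with
  | node s c ih =>
    obtain ⟨d, f, u, ht, hc, rfl⟩ := lggGPTA.run_node_iff.1 h
    cases s
    · exact ht.elim
    · obtain ⟨rfl, hf⟩ := ht
      obtain ⟨n, hn, hu⟩ := ih (0 : Fin 1) (hf (0 : Fin 1) ▸ hc (0 : Fin 1))
      have hs : ∑ i, u i = u (0 : Fin 1) := Fin.sum_univ_one u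
      refine ⟨n + 1, ?_, by rw [hs, hu, ← Pi.single_add, add_comm]⟩
      rw [gpow, gamT, ← hn]
      congr
      exact funext fun i => by fin_cases i; rfl
    · obtain rfl := ht
      have hs : ∑ i, u i = 0 := Fin.sum_univ_zero u
      refine ⟨0, ?_, by simp [hs]⟩
      rw [gpow, hashT]
      congr
      exact funext fun i => i.elim0

lemma lggGPTA_lang : lggGPTA.Lang = Lgg := by
  ext t
  constructor
  · rintro ⟨v, h, hv⟩
    obtain ⟨s, c⟩ := t
    obtain ⟨d, f, u, ht, hc, rfl⟩ := lggGPTA.run_node_iff.1 h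
    cases s <;> try exact ht.elim
    obtain ⟨rfl, hf⟩ := ht
    obtain ⟨n, hn, hu₀⟩ := lggGPTA_run_some_iff.1 (hf (0 : Fin 2) ▸ hc (0 : Fin 2))
    obtain ⟨k, hk, hu₁⟩ := lggGPTA_run_some_iff.1 (hf (1 : Fin 2) ▸ hc (1 : Fin 2))
    have hs : ∑ i, u i = u (0 : Fin 2) + u (1 : Fin 2) := Fin.sum_univ_two u
    have hnk : n = k := by simpa [lggGPTA, hs, hu₀, hu₁] using hv
    subst hnk
    refine ⟨n, ?_⟩
    simp only [sigT]
    congr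
    exact funext fun i => by fin_cases i; exacts [hn, hk]
  · rintro ⟨n, rfl⟩
    refine ⟨Pi.single 0 n + Pi.single 1 n, lggGPTA.run_node_iff.2
      ⟨0, some, fun i => Pi.single i n, ⟨rfl, fun _ => rfl⟩, fun i => ?_, ?_⟩, by simp [lggGPTA]⟩
    · exact lggGPTA_run_some_iff.2 ⟨n, by fin_cases i <;> rfl, rfl⟩
    · exact ((zero_add _).trans (Fin.sum_univ_two (f := fun i => Pi.single i n))).symm

lemma gamT_injective : Function.Injective gamT := fun _ _ h =>
  congrFun (eq_of_heq (GTree.node.inj h).2) (0 : Fin 1)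

lemma hashT_ne_gamT (t : GTree Sg arG) : hashT ≠ gamT t := fun h =>
  Sg.noConfusion (GTree.node.inj h).1

lemma gpow_hashT_injective : Function.Injective (gpow · hashT) := by
  intro n k h
  induction n generalizing k with
  | zero => cases k with
    | zero => rfl
    | succ k => exact absurd h (hashT_ne_gamT _)
  | succ n ih => cases k with
    | zero => exact absurd h.symm (hashT_ne_gamT _)
    | succ k => exact congrArg Nat.succ (ih (gamT_injective h))

lemma sigT_injective2 : Function.Injective2 sigT := fun _ _ _ _ h =>
  have hc := eq_of_heq (GTree.node.inj h).2
  ⟨congrFun hc (0 : Fin 2), congrFun hc (1 : Fin 2)⟩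

theorem not_exists_pta_lang_eq_lgg : ¬ ∃ (m : ℕ) (A : PTA Sg arG m), A.Lang = Lgg := by
  rintro ⟨m, A, hA⟩
  let c : ℕ → Fin (arG .sig) → GTree Sg arG := fun n => ![gpow n hashT, gpow n hashT]
  have hacc (n : ℕ) : A.Acc A.init 0 (.node .sig (c n)) := by
    change sigT _ _ ∈ A.Lang
    exact hA ▸ ⟨n, rfl⟩
  obtain ⟨n, k, hnk, hmix⟩ := A.exists_ne_acc_node_mixed c hacc
  have hmem : sigT (gpow n hashT) (gpow k hashT) ∈ Lgg :=
    hA ▸ hmix ![gpow n hashT, gpow k hashT] fun i => by fin_cases i; exacts [.inl rfl, .inr rfl]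
  obtain ⟨j, hj⟩ := hmem
  obtain ⟨hn, hk⟩ := sigT_injective2 hj
  exact hnk ((gpow_hashT_injective hn).trans (gpow_hashT_injective hk).symm)

end Lgg

section Lab
open GTree List

inductive LabState | readA | readB
  deriving DecidableEq

instance : Fintype LabState :=
  ⟨{.readA, .readB}, fun q => by cases q <;> decide⟩

def labStep : LabState → Sab → Option (LabState × (Fin 2 → ℕ))
  | .readA, .a => some (.readA, Pi.single 0 1)
  | .readA, .b => some (.readB, Pi.single 1 1)
  | .readB, .b => some (.readB, Pi.single 1 1)
  | .readB, .hash => some (.readB, 0)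
  | _, _ => none

def labPTA : PTA Sab arAb 2 where
  Q := LabState
  finQ := inferInstance
  init := .readA
  D := {Pi.single 0 1, Pi.single 1 1, 0}
  trans q s f := ∃ r ∈ labStep q s, ∀ i, f i = r
  transD := by
    rintro q s f ⟨r, hr, hf⟩ i
    rw [hf i]
    cases q <;> cases s <;> simp only [labStep, Option.mem_def, reduceCtorEq] at hr <;>
      simp [← Option.some.inj hr]
  C := {v | v 0 = v 1}
  semiC := isSemilinear_setOf_apply_zero_eq_apply_one

lemma pathAccepts_readB_iff {w : Fin 2 → ℕ} {p : List Sab} :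
    PathAccepts arAb labStep labPTA.C .readB w p ↔
      ∃ k, p = replicate k .b ++ [.hash] ∧ w 0 = w 1 + k := by
  induction p generalizing w with
  | nil => simp [PathAccepts]
  | cons s p ih =>
    rw [← Nat.or_exists_add_one]
    cases s
    · simp [PathAccepts, labStep, replicate_succ]
    · simp [PathAccepts, labStep, arAb, replicate_succ, ih, add_assoc, add_comm 1]
    · simp [PathAccepts, labStep, arAb, labPTA, replicate_succ]

lemma pathAccepts_readA_iff {w : Fin 2 → ℕ} {p : List Sab} :
    PathAccepts arAb labStep labPTA.C .readA w p ↔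
      ∃ n k, p = replicate n .a ++ replicate (k + 1) .b ++ [.hash] ∧
        w 0 + n = w 1 + (k + 1) := by
  induction p generalizing w with
  | nil => simp [PathAccepts]
  | cons s p ih =>
    rw [← Nat.or_exists_add_one]
    cases s
    · simp [PathAccepts, labStep, arAb, replicate_succ, ih, add_assoc, add_comm 1]
    · simp [PathAccepts, labStep, arAb, replicate_succ, pathAccepts_readB_iff, add_assoc,
        add_comm 1]
    · simp [PathAccepts, labStep, replicate_succ]

lemma labPTA_lang : labPTA.Lang = Lab := by
  ext t
  refine (labPTA.acc_iff_forall_pathAccepts labStep fun _ _ _ => Iff.rfl).trans <|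
    forall₂_congr fun p _ => pathAccepts_readA_iff.trans ⟨?_, ?_⟩
  · rintro ⟨n, k, rfl, hnk⟩
    simp only [Pi.zero_apply, zero_add] at hnk
    exact ⟨n, by omega, hnk ▸ rfl⟩
  · rintro ⟨_ | k, hk, rfl⟩
    · omega
    · exact ⟨k + 1, k, rfl, rfl⟩

def fullTree : List Sab → GTree Sab arAb
  | [] => .node .hash ![]
  | s :: w => binNode s (fullTree w) (fullTree w)

lemma eq_of_mem_pathWords_fullTree {w : List Sab} (hw : Sab.hash ∉ w) :
    ∀ p ∈ (fullTree w).pathWords, p = w ++ [.hash] := by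
  induction w with
  | nil => simp [fullTree, pathWords, arAb]
  | cons s w ih =>
    have hs : arAb s = 2 := by cases s <;> simp_all [arAb]
    rw [fullTree, forall_mem_pathWords_binNode hs]
    have ih := ih fun h => hw (mem_cons_of_mem s h)
    exact ⟨fun p hp => by rw [ih p hp, cons_append], fun p hp => by rw [ih p hp, cons_append]⟩

lemma eq_and_eq_of_replicate_append_eq {i j n k : ℕ}
    (h : replicate i Sab.a ++ replicate j .b ++ [.hash] =
      replicate n .a ++ replicate k .b ++ [.hash]) :
    i = n ∧ j = k :=
  ⟨by simpa [count_replicate] using congrArg (count Sab.a) h,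
    by simpa [count_replicate] using congrArg (count Sab.b) h⟩

theorem not_exists_gpta_lang_eq_lab : ¬ ∃ (m : ℕ) (A : GPTA Sab arAb m), A.Lang = Lab := by
  rintro ⟨m, A, hA⟩
  have := A.finQ
  have ha : arAb .a = 2 := rfl
  set K := Fintype.card A.Q + 1
  -- `spine .a (fullTree (replicate K .b)) K ts = fullTree (replicate K .a ++ replicate K .b)`
  let ts : Fin K → GTree Sab arAb := fun i => fullTree (replicate (K - 1 - i) .a ++ replicate K .b)
  have hts (i : Fin K) : ∀ p ∈ (ts i).pathWords,
      p = replicate (K - 1 - i) .a ++ replicate K .b ++ [.hash] :=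
    eq_of_mem_pathWords_fullTree (by simp)
  have hT : spine .a (fullTree (replicate K .b)) K ts ∈ Lab := by
    rw [Lab, Set.mem_ofPred_eq, forall_mem_pathWords_spine ha]
    refine ⟨fun p hp => ⟨K, by omega, ?_⟩, fun i p hp => ⟨K, by omega, ?_⟩⟩
    · rw [eq_of_mem_pathWords_fullTree (by simp) p hp]
      simp
    · rw [hts i p hp, ← append_assoc, ← append_assoc, ← replicate_add,
        show (i : ℕ) + 1 + (K - 1 - i) = K by omega]
  obtain ⟨v, hrun, hv⟩ : _ ∈ A.Lang := hA ▸ hT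
  obtain ⟨qs, hqs⟩ := A.exists_run_spine_comp_perm ha hrun
  obtain ⟨i, j, hij, hq⟩ := Fintype.exists_ne_map_eq_of_card_lt qs (by simp [K])
  have hswap : spine .a (fullTree (replicate K .b)) K (ts ∘ Equiv.swap i j) ∈ Lab := by
    refine hA ▸ ⟨v, hqs _ fun x => ?_, hv⟩
    rcases eq_or_ne x i with rfl | hxi
    · simp [hq]
    rcases eq_or_ne x j with rfl | hxj
    · simp [hq]
    · rw [Equiv.swap_apply_of_ne_of_ne hxi hxj]
  rw [Lab, Set.mem_ofPred_eq, forall_mem_pathWords_spine ha] at hswap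
  obtain ⟨p, hp⟩ := exists_mem_of_ne_nil _ (ts j).pathWords_ne_nil
  obtain ⟨n, -, hn⟩ := hswap.2 i p (by simpa using hp)
  rw [hts j p hp, ← append_assoc, ← append_assoc, ← replicate_add] at hn
  have := eq_and_eq_of_replicate_append_eq hn
  omega

end Lab

theorem gpta_pta_incomparable :
    (∃ (m : ℕ) (A : GPTA Sg arG m), A.Lang = Lgg) ∧
    (¬ ∃ (m : ℕ) (A : PTA Sg arG m), A.Lang = Lgg) ∧
    (∃ (m : ℕ) (A : PTA Sab arAb m), A.Lang = Lab) ∧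
    (¬ ∃ (m : ℕ) (A : GPTA Sab arAb m), A.Lang = Lab) :=
  ⟨⟨2, lggGPTA, lggGPTA_lang⟩, not_exists_pta_lang_eq_lgg, ⟨2, labPTA, labPTA_lang⟩,
    not_exists_gpta_lang_eq_lab⟩
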